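/- Let N ≥ 3, 2* = 2N/(N−2), and let S = inf{ (∫_{ℝ^N} |∇φ|² dx)/(∫_{ℝ^N} |φ|^{2*} dx)^{2/2*} : φ ∈ C_c^∞(ℝ^N), φ ≢ 0 } be the sharp Sobolev constant. Then for every u ∈ C_c^∞(ℝ^N), ∫_{ℝ^N} |∇u|² dm_N ≥ S (∫_{ℝ^N} |u|^{2*} dm_N)^{2/2*} + (N/2) ∫_{ℝ^N} u² dm_N. -/

import Mathlib

open MeasureTheory ENNReal

/-- The measure `m_N` on `ℝ^N` with density `e^{|x|²/2}` w.r.t. Lebesgue measure. -/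
noncomputable def mN (N : ℕ) : Measure (EuclideanSpace ℝ (Fin N)) :=
  MeasureTheory.volume.withDensity fun x => ENNReal.ofReal (Real.exp (‖x‖ ^ 2 / 2))

lemma mN_integral (N : ℕ) (f : EuclideanSpace ℝ (Fin N) → ℝ) :
    ∫ x, f x ∂(mN N) = ∫ x, Real.exp (‖x‖ ^ 2 / 2) * f x := by
  rw [mN]
  have h : (fun x : EuclideanSpace ℝ (Fin N) => ENNReal.ofReal (Real.exp (‖x‖ ^ 2 / 2)))
      = fun x => ((Real.toNNReal (Real.exp (‖x‖ ^ 2 / 2)) : NNReal) : ℝ≥0∞) := rfl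
  have hmeas : Measurable fun x : EuclideanSpace ℝ (Fin N) =>
      Real.toNNReal (Real.exp (‖x‖ ^ 2 / 2)) := by
    measurability
  rw [h, integral_withDensity_eq_integral_smul hmeas]
  congr 1
  ext x
  simp [NNReal.smul_def, Real.coe_toNNReal _ (Real.exp_nonneg _)]

variable {N : ℕ}

lemma hasFDerivAt_wt (c : ℝ) (x : EuclideanSpace ℝ (Fin N)) :
    HasFDerivAt (fun y : EuclideanSpace ℝ (Fin N) => Real.exp (‖y‖ ^ 2 / c))
      ((Real.exp (‖x‖ ^ 2 / c) * (2 / c)) • innerSL ℝ x) x := by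
  have h1 : HasFDerivAt (fun y : EuclideanSpace ℝ (Fin N) => ‖y‖ ^ 2)
      (2 • innerSL ℝ x) x := (hasFDerivAt_id x).norm_sq
  have h2 := ((h1.const_smul (c⁻¹ : ℝ)).exp)
  have h3 : (fun y : EuclideanSpace ℝ (Fin N) => Real.exp ((c⁻¹ • fun y => ‖y‖ ^ 2) y))
      = fun y => Real.exp (‖y‖ ^ 2 / c) := by
    funext y; rw [Pi.smul_apply, smul_eq_mul, inv_mul_eq_div]
  rw [h3] at h2
  refine h2.congr_fderiv ?_
  ext y
  simp [smul_eq_mul, inv_mul_eq_div]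
  ring

lemma hasFDerivAt_v (u : EuclideanSpace ℝ (Fin N) → ℝ) (hu : Differentiable ℝ u)
    (x : EuclideanSpace ℝ (Fin N)) :
    HasFDerivAt (fun y => u y * Real.exp (‖y‖ ^ 2 / 4))
      (Real.exp (‖x‖ ^ 2 / 4) • fderiv ℝ u x
        + (u x * Real.exp (‖x‖ ^ 2 / 4) / 2) • innerSL ℝ x) x := by
  have h := ((hu x).hasFDerivAt).mul (hasFDerivAt_wt 4 x)
  refine h.congr_fderiv ?_
  ext y
  simp
  ring

lemma toDual_symm_innerSL (x : EuclideanSpace ℝ (Fin N)) :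
    (InnerProductSpace.toDual ℝ (EuclideanSpace ℝ (Fin N))).symm
      (innerSL ℝ x : EuclideanSpace ℝ (Fin N) →L[ℝ] ℝ) = x := by
  have : InnerProductSpace.toDual ℝ (EuclideanSpace ℝ (Fin N)) x = innerSL ℝ x := by
    ext y; simp [InnerProductSpace.toDual_apply_apply]
  rw [← this, LinearIsometryEquiv.symm_apply_apply]

lemma norm_fderiv_v_sq (u : EuclideanSpace ℝ (Fin N) → ℝ) (hu : Differentiable ℝ u)
    (x : EuclideanSpace ℝ (Fin N)) :
    ‖fderiv ℝ (fun y => u y * Real.exp (‖y‖ ^ 2 / 4)) x‖ ^ 2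
      = Real.exp (‖x‖ ^ 2 / 2) * (‖fderiv ℝ u x‖ ^ 2
          + u x * fderiv ℝ u x x + u x ^ 2 * ‖x‖ ^ 2 / 4) := by
  set D := (InnerProductSpace.toDual ℝ (EuclideanSpace ℝ (Fin N))).symm
  rw [(hasFDerivAt_v u hu x).fderiv]
  set L := fderiv ℝ u x
  set c := Real.exp (‖x‖ ^ 2 / 4) with hcdef
  have hc : c ^ 2 = Real.exp (‖x‖ ^ 2 / 2) := by
    rw [hcdef, sq, ← Real.exp_add]; congr 1; ring
  have hD : D (c • L + (u x * c / 2) • innerSL ℝ x) = c • D L + (u x * c / 2) • x := by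
    simp [D, toDual_symm_innerSL]
  have hnorm : ‖c • L + (u x * c / 2) • innerSL ℝ x‖
      = ‖c • D L + (u x * c / 2) • x‖ := by
    rw [← hD, LinearIsometryEquiv.norm_map]
  rw [hnorm, norm_add_sq_real]
  have h1 : ‖c • D L‖ ^ 2 = c ^ 2 * ‖L‖ ^ 2 := by
    rw [norm_smul]
    simp [mul_pow, LinearIsometryEquiv.norm_map, abs_of_nonneg (Real.exp_nonneg _)]
  have h2 : (inner ℝ (c • D L) ((u x * c / 2) • x) : ℝ)
      = c ^ 2 * (u x / 2) * (L x) := by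
    rw [real_inner_smul_left, real_inner_smul_right, InnerProductSpace.toDual_symm_apply]
    ring
  have h3 : ‖(u x * c / 2) • x‖ ^ 2 = c ^ 2 * (u x ^ 2 * ‖x‖ ^ 2 / 4) := by
    rw [norm_smul, Real.norm_eq_abs, mul_pow, sq_abs]
    ring
  rw [h1, h2, h3, hc]
  ring

lemma contDiff_wt (c : ℝ) :
    ContDiff ℝ (⊤ : ℕ∞) (fun y : EuclideanSpace ℝ (Fin N) => Real.exp (‖y‖ ^ 2 / c)) :=
  Real.contDiff_exp.comp ((contDiff_norm_sq ℝ).div_const c)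

lemma ibp (u : EuclideanSpace ℝ (Fin N) → ℝ) (hu : ContDiff ℝ (⊤ : ℕ∞) u)
    (hs : HasCompactSupport u) :
    ∫ x : EuclideanSpace ℝ (Fin N), Real.exp (‖x‖ ^ 2 / 2) * (u x * fderiv ℝ u x x)
      = -(1/2) * ∫ x : EuclideanSpace ℝ (Fin N),
          Real.exp (‖x‖ ^ 2 / 2) * ((N + ‖x‖ ^ 2) * u x ^ 2) := by
  classical
  set g : EuclideanSpace ℝ (Fin N) → ℝ := fun x => u x ^ 2 with hgdef
  have hg : ContDiff ℝ (⊤ : ℕ∞) g := hu.pow 2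
  have hgs : HasCompactSupport g := by
    have := hs.mul_right (f' := u)
    simpa [hgdef, pow_two, Pi.mul_def] using this
  have hgd : Differentiable ℝ g := hg.differentiable (by simp)
  have hud : Differentiable ℝ u := hu.differentiable (by simp)
  have hgder : ∀ x, fderiv ℝ g x = (2 * u x) • fderiv ℝ u x := by
    intro x
    have h := ((hud x).hasFDerivAt).mul ((hud x).hasFDerivAt)
    have h2 : HasFDerivAt g ((2 * u x) • fderiv ℝ u x) x := by
      have hg' : g = fun y => u y * u y := by funext y; simp [hgdef, pow_two]
      rw [hg']
      refine h.congr_fderiv ?_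
      · ext y; simp; ring
    exact h2.fderiv
  -- the coordinate functions
  set wt : EuclideanSpace ℝ (Fin N) → ℝ := fun x => Real.exp (‖x‖ ^ 2 / 2) with hwtdef
  have hwt : ContDiff ℝ (⊤ : ℕ∞) wt := contDiff_wt 2
  set f : Fin N → EuclideanSpace ℝ (Fin N) → ℝ := fun i x => x i * wt x with hfdef
  have hf : ∀ i, ContDiff ℝ (⊤ : ℕ∞) (f i) := fun i =>
    ((EuclideanSpace.proj i : EuclideanSpace ℝ (Fin N) →L[ℝ] ℝ).contDiff).mul hwt
  have hfder : ∀ i x, HasFDerivAt (f i)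
      ((x i) • ((Real.exp (‖x‖ ^ 2 / 2)) • innerSL ℝ x)
        + (wt x) • (EuclideanSpace.proj i : EuclideanSpace ℝ (Fin N) →L[ℝ] ℝ)) x := by
    intro i x
    have h := ((EuclideanSpace.proj i :
        EuclideanSpace ℝ (Fin N) →L[ℝ] ℝ).hasFDerivAt (x := x)).mul (hasFDerivAt_wt 2 x)
    refine h.congr_fderiv ?_
    · norm_num [hwtdef]
  set e : Fin N → EuclideanSpace ℝ (Fin N) := fun i => EuclideanSpace.single i 1 with hedef
  have hL : ∀ (L : EuclideanSpace ℝ (Fin N) →L[ℝ] ℝ) (x : EuclideanSpace ℝ (Fin N)),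
      L x = ∑ i, x i * L (e i) := by
    intro L x
    have hxrep : ∑ i, x i • e i = x := by
      simpa [hedef, EuclideanSpace.basisFun_apply, EuclideanSpace.basisFun_repr]
        using (EuclideanSpace.basisFun (Fin N) ℝ).sum_repr x
    conv_lhs => rw [← hxrep]
    rw [map_sum]
    simp
  have hfiev : ∀ i x, fderiv ℝ (f i) x (e i) = wt x * (1 + x i ^ 2) := by
    intro i x
    rw [(hfder i x).fderiv]
    simp only [hedef, hwtdef]
    simp [EuclideanSpace.single_apply, real_inner_smul_left,
      EuclideanSpace.inner_single_right]
    ring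
  -- integrability
  have hcontdg : Continuous (fun x => fderiv ℝ g x) := hg.continuous_fderiv (by simp)
  have hint1 : ∀ i, Integrable (fun x => f i x * fderiv ℝ g x (e i)) := by
    intro i
    apply Continuous.integrable_of_hasCompactSupport
    · exact ((hf i).continuous).mul (hcontdg.clm_apply continuous_const)
    · exact HasCompactSupport.mul_left
        ((hgs.fderiv (𝕜 := ℝ)).comp_left (g := fun L : EuclideanSpace ℝ (Fin N) →L[ℝ] ℝ => L (e i))
          (by simp))
  have hint2 : ∀ i, Integrable (fun x => fderiv ℝ (f i) x (e i) * g x) := by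
    intro i
    apply Continuous.integrable_of_hasCompactSupport
    · exact (((hf i).continuous_fderiv (by simp)).clm_apply continuous_const).mul hg.continuous
    · exact HasCompactSupport.mul_left hgs
  have hint3 : ∀ i, Integrable (fun x => f i x * g x) := by
    intro i
    apply Continuous.integrable_of_hasCompactSupport
    · exact ((hf i).continuous).mul hg.continuous
    · exact HasCompactSupport.mul_left hgs
  have key : ∀ i, ∫ x, f i x * fderiv ℝ g x (e i) = -∫ x, fderiv ℝ (f i) x (e i) * g x :=
    fun i => integral_mul_fderiv_eq_neg_fderiv_mul_of_integrable (hint2 i) (hint1 i) (hint3 i)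
      (fun x _ => (hf i).differentiable (by simp) x) (fun x _ => hgd x)
  have hsum : ∫ x, wt x * fderiv ℝ g x x
      = -∫ x, wt x * ((N + ‖x‖ ^ 2) * g x) := by
    have hns : ∀ x : EuclideanSpace ℝ (Fin N), ∑ i, x i ^ 2 = ‖x‖ ^ 2 := by
      intro x
      rw [EuclideanSpace.norm_eq, Real.sq_sqrt (by positivity)]
      simp [sq_abs]
    calc ∫ x, wt x * fderiv ℝ g x x
        = ∫ x, ∑ i, f i x * fderiv ℝ g x (e i) := by
          congr 1; funext x
          rw [hL (fderiv ℝ g x) x, Finset.mul_sum]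
          congr 1; funext i
          simp [hfdef]; ring
      _ = ∑ i, ∫ x, f i x * fderiv ℝ g x (e i) := integral_finset_sum _ fun i _ => hint1 i
      _ = ∑ i, -∫ x, fderiv ℝ (f i) x (e i) * g x := by
          exact Finset.sum_congr rfl fun i _ => key i
      _ = -∑ i, ∫ x, fderiv ℝ (f i) x (e i) * g x := by rw [← Finset.sum_neg_distrib]
      _ = -∫ x, ∑ i, fderiv ℝ (f i) x (e i) * g x := by
          rw [integral_finset_sum _ fun i _ => hint2 i]
      _ = -∫ x, wt x * ((N + ‖x‖ ^ 2) * g x) := by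
          have : (fun x : EuclideanSpace ℝ (Fin N) => ∑ i, fderiv ℝ (f i) x (e i) * g x)
              = fun x => wt x * ((N + ‖x‖ ^ 2) * g x) := by
            funext x
            simp only [hfiev]
            have hterm : ∀ i : Fin N, wt x * (1 + x i ^ 2) * g x
                = wt x * g x + x i ^ 2 * (wt x * g x) := fun i => by ring
            simp only [hterm]
            rw [Finset.sum_add_distrib, Finset.sum_const, ← Finset.sum_mul, hns x]
            simp
            ring
          rw [this]
  -- conclude
  have hhalf : (fun x : EuclideanSpace ℝ (Fin N) => Real.exp (‖x‖ ^ 2 / 2) * (u x * fderiv ℝ u x x))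
      = fun x => (1/2) * (wt x * fderiv ℝ g x x) := by
    funext x
    rw [hgder x]
    simp [hwtdef]
    ring
  rw [hhalf, integral_const_mul, hsum, mul_neg, ← neg_mul, ← integral_const_mul]

/-- Sobolev-type inequality with respect to `m_N`: with `S` the sharp Sobolev constant
and `2* = 2N/(N-2)`, for every `u ∈ C_c^∞(ℝ^N)` one has
`∫ |∇u|² dm_N ≥ S (∫ |u|^{2*} dm_N)^{2/2*} + (N/2) ∫ u² dm_N`. -/
theorem sobolev_mN (N : ℕ) (hN : 3 ≤ N) (p : ℝ) (hp : p = 2 * N / ((N : ℝ) - 2))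
    (S : ℝ)
    (hS : S = sInf {R : ℝ | ∃ φ : EuclideanSpace ℝ (Fin N) → ℝ,
      ContDiff ℝ (⊤ : ℕ∞) φ ∧ HasCompactSupport φ ∧ φ ≠ 0 ∧
      R = (∫ x, ‖fderiv ℝ φ x‖ ^ 2) / (∫ x, |φ x| ^ p) ^ (2 / p)})
    (u : EuclideanSpace ℝ (Fin N) → ℝ)
    (hu : ContDiff ℝ (⊤ : ℕ∞) u) (hsupp : HasCompactSupport u) :
    S * (∫ x, |u x| ^ p ∂(mN N)) ^ (2 / p) + ((N : ℝ) / 2) * ∫ x, u x ^ 2 ∂(mN N)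
      ≤ ∫ x, ‖fderiv ℝ u x‖ ^ 2 ∂(mN N) := by
  have hN2 : (0 : ℝ) < (N : ℝ) - 2 := by
    have : (3 : ℝ) ≤ (N : ℝ) := by exact_mod_cast hN
    linarith
  have hp0 : 0 < p := by
    rw [hp]; positivity
  have hp2 : 2 ≤ p := by
    rw [hp, le_div_iff₀ hN2]
    have : (3 : ℝ) ≤ (N : ℝ) := by exact_mod_cast hN
    linarith
  -- S is nonnegative
  have hS0 : 0 ≤ S := by
    rw [hS]
    apply Real.sInf_nonneg
    rintro R ⟨φ, -, -, -, rfl⟩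
    apply div_nonneg
    · exact integral_nonneg fun x => by positivity
    · exact Real.rpow_nonneg (integral_nonneg fun x => by positivity) _
  by_cases hu0 : u = 0
  · subst hu0
    simp only [Pi.zero_apply, abs_zero, Real.zero_rpow hp0.ne', ne_eq]
    have h0 : (fun x : EuclideanSpace ℝ (Fin N) => ‖fderiv ℝ (0 : EuclideanSpace ℝ (Fin N) → ℝ) x‖ ^ 2) = fun _ => (0:ℝ) := by
      funext x
      rw [show (0 : EuclideanSpace ℝ (Fin N) → ℝ) = fun _ => (0:ℝ) from rfl, fderiv_fun_const]
      simp
    simp [h0, Real.zero_rpow (by positivity : 2/p ≠ 0)]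
  -- main case
  have hud : Differentiable ℝ u := hu.differentiable (by simp)
  set v : EuclideanSpace ℝ (Fin N) → ℝ := fun x => u x * Real.exp (‖x‖ ^ 2 / 4) with hvdef
  have hv : ContDiff ℝ (⊤ : ℕ∞) v := hu.mul (contDiff_wt 4)
  have hvs : HasCompactSupport v := hsupp.mul_right
  have hv0 : v ≠ 0 := by
    intro h
    apply hu0
    funext x
    have hx := congrFun h x
    simp only [hvdef, Pi.zero_apply] at hx
    rcases mul_eq_zero.1 hx with h' | h'
    · exact h'
    · exact absurd h' (Real.exp_ne_zero _)
  have hcwt : Continuous (fun x : EuclideanSpace ℝ (Fin N) => Real.exp (‖x‖ ^ 2 / 2)) :=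
    (contDiff_wt 2).continuous
  have hcdu : Continuous (fderiv ℝ u) := hu.continuous_fderiv (by simp)
  have hsdu : HasCompactSupport (fderiv ℝ u) := hsupp.fderiv (𝕜 := ℝ)
  have hsq : HasCompactSupport (fun x => u x ^ 2) := by
    have := hsupp.mul_right (f' := u)
    simpa [pow_two, Pi.mul_def] using this
  -- integrability of pieces
  have Ig : Integrable (fun x : EuclideanSpace ℝ (Fin N) =>
      Real.exp (‖x‖ ^ 2 / 2) * ‖fderiv ℝ u x‖ ^ 2) := by
    apply Continuous.integrable_of_hasCompactSupport
    · exact hcwt.mul ((hcdu.norm).pow 2)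
    · exact HasCompactSupport.mul_left
        (hsdu.comp_left (g := fun L : EuclideanSpace ℝ (Fin N) →L[ℝ] ℝ => ‖L‖ ^ 2) (by simp))
  have Ic : Integrable (fun x : EuclideanSpace ℝ (Fin N) =>
      Real.exp (‖x‖ ^ 2 / 2) * (u x * fderiv ℝ u x x)) := by
    apply Continuous.integrable_of_hasCompactSupport
    · exact hcwt.mul (hu.continuous.mul (hcdu.clm_apply continuous_id))
    · exact HasCompactSupport.mul_left (hsupp.mul_right)
  have Ip : Integrable (fun x : EuclideanSpace ℝ (Fin N) =>
      Real.exp (‖x‖ ^ 2 / 2) * (u x ^ 2 * ‖x‖ ^ 2)) := by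
    apply Continuous.integrable_of_hasCompactSupport
    · exact hcwt.mul (((hu.continuous).pow 2).mul (continuous_norm.pow 2))
    · exact HasCompactSupport.mul_left (hsq.mul_right)
  have Im : Integrable (fun x : EuclideanSpace ℝ (Fin N) =>
      Real.exp (‖x‖ ^ 2 / 2) * u x ^ 2) := by
    apply Continuous.integrable_of_hasCompactSupport
    · exact hcwt.mul ((hu.continuous).pow 2)
    · exact HasCompactSupport.mul_left hsq
  set G : ℝ := ∫ x : EuclideanSpace ℝ (Fin N), Real.exp (‖x‖ ^ 2 / 2) * ‖fderiv ℝ u x‖ ^ 2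
    with hGdef
  set M : ℝ := ∫ x : EuclideanSpace ℝ (Fin N), Real.exp (‖x‖ ^ 2 / 2) * u x ^ 2 with hMdef
  set P : ℝ := ∫ x : EuclideanSpace ℝ (Fin N), Real.exp (‖x‖ ^ 2 / 2) * (u x ^ 2 * ‖x‖ ^ 2)
    with hPdef
  have hP0 : 0 ≤ P := integral_nonneg fun x => by positivity
  -- split of the gradient integral of v
  have h1 : ∫ x : EuclideanSpace ℝ (Fin N), ‖fderiv ℝ v x‖ ^ 2
      = G + ((∫ x : EuclideanSpace ℝ (Fin N),
          Real.exp (‖x‖ ^ 2 / 2) * (u x * fderiv ℝ u x x)) + (1/4) * P) := by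
    have heq : (fun x : EuclideanSpace ℝ (Fin N) => ‖fderiv ℝ v x‖ ^ 2)
        = fun x => Real.exp (‖x‖ ^ 2 / 2) * ‖fderiv ℝ u x‖ ^ 2
          + (Real.exp (‖x‖ ^ 2 / 2) * (u x * fderiv ℝ u x x)
            + (1/4) * (Real.exp (‖x‖ ^ 2 / 2) * (u x ^ 2 * ‖x‖ ^ 2))) := by
      funext x
      have hns := norm_fderiv_v_sq u hud x
      rw [← hvdef] at hns
      rw [hns]
      ring
    rw [heq]
    calc ∫ x : EuclideanSpace ℝ (Fin N),
          (Real.exp (‖x‖ ^ 2 / 2) * ‖fderiv ℝ u x‖ ^ 2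
          + (Real.exp (‖x‖ ^ 2 / 2) * (u x * fderiv ℝ u x x)
            + (1/4) * (Real.exp (‖x‖ ^ 2 / 2) * (u x ^ 2 * ‖x‖ ^ 2))))
        = G + ∫ x : EuclideanSpace ℝ (Fin N),
            (Real.exp (‖x‖ ^ 2 / 2) * (u x * fderiv ℝ u x x)
            + (1/4) * (Real.exp (‖x‖ ^ 2 / 2) * (u x ^ 2 * ‖x‖ ^ 2))) :=
          integral_add Ig (Ic.add (Ip.const_mul (1/4)))
      _ = G + ((∫ x : EuclideanSpace ℝ (Fin N),
            Real.exp (‖x‖ ^ 2 / 2) * (u x * fderiv ℝ u x x))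
          + ∫ x : EuclideanSpace ℝ (Fin N),
            (1/4) * (Real.exp (‖x‖ ^ 2 / 2) * (u x ^ 2 * ‖x‖ ^ 2))) := by
          rw [integral_add Ic (Ip.const_mul (1/4))]
      _ = G + ((∫ x : EuclideanSpace ℝ (Fin N),
            Real.exp (‖x‖ ^ 2 / 2) * (u x * fderiv ℝ u x x)) + (1/4) * P) := by
          rw [integral_const_mul]
  -- the integration by parts identity
  have h2 := ibp u hu hsupp
  have h3 : ∫ x : EuclideanSpace ℝ (Fin N),
      Real.exp (‖x‖ ^ 2 / 2) * ((N + ‖x‖ ^ 2) * u x ^ 2) = N * M + P := by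
    have heq : (fun x : EuclideanSpace ℝ (Fin N) =>
        Real.exp (‖x‖ ^ 2 / 2) * ((N + ‖x‖ ^ 2) * u x ^ 2))
        = fun x => (N : ℝ) * (Real.exp (‖x‖ ^ 2 / 2) * u x ^ 2)
          + Real.exp (‖x‖ ^ 2 / 2) * (u x ^ 2 * ‖x‖ ^ 2) := by
      funext x; ring
    rw [heq]
    calc ∫ x : EuclideanSpace ℝ (Fin N),
          ((N : ℝ) * (Real.exp (‖x‖ ^ 2 / 2) * u x ^ 2)
            + Real.exp (‖x‖ ^ 2 / 2) * (u x ^ 2 * ‖x‖ ^ 2))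
        = (∫ x : EuclideanSpace ℝ (Fin N), (N : ℝ) * (Real.exp (‖x‖ ^ 2 / 2) * u x ^ 2)) + P :=
          integral_add (Im.const_mul _) Ip
      _ = (N : ℝ) * M + P := by rw [integral_const_mul]
  have h4 : ∫ x : EuclideanSpace ℝ (Fin N), ‖fderiv ℝ v x‖ ^ 2
      = G - (N / 2) * M - (1/4) * P := by
    rw [h1, h2, h3]; ring
  -- Sobolev inequality applied to v
  have hmem : (∫ x : EuclideanSpace ℝ (Fin N), ‖fderiv ℝ v x‖ ^ 2) /
      (∫ x : EuclideanSpace ℝ (Fin N), |v x| ^ p) ^ (2 / p) ∈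
      {R : ℝ | ∃ φ : EuclideanSpace ℝ (Fin N) → ℝ,
        ContDiff ℝ (⊤ : ℕ∞) φ ∧ HasCompactSupport φ ∧ φ ≠ 0 ∧
        R = (∫ x, ‖fderiv ℝ φ x‖ ^ 2) / (∫ x, |φ x| ^ p) ^ (2 / p)} :=
    ⟨v, hv, hvs, hv0, rfl⟩
  have hbdd : BddBelow {R : ℝ | ∃ φ : EuclideanSpace ℝ (Fin N) → ℝ,
      ContDiff ℝ (⊤ : ℕ∞) φ ∧ HasCompactSupport φ ∧ φ ≠ 0 ∧
      R = (∫ x, ‖fderiv ℝ φ x‖ ^ 2) / (∫ x, |φ x| ^ p) ^ (2 / p)} := by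
    refine ⟨0, ?_⟩
    rintro R ⟨φ, -, -, -, rfl⟩
    apply div_nonneg
    · exact integral_nonneg fun x => by positivity
    · exact Real.rpow_nonneg (integral_nonneg fun x => by positivity) _
  have hSle : S ≤ (∫ x : EuclideanSpace ℝ (Fin N), ‖fderiv ℝ v x‖ ^ 2) /
      (∫ x : EuclideanSpace ℝ (Fin N), |v x| ^ p) ^ (2 / p) := hS ▸ csInf_le hbdd hmem
  have hIv : Integrable (fun x : EuclideanSpace ℝ (Fin N) => |v x| ^ p) := by
    apply Continuous.integrable_of_hasCompactSupport
    · exact (hv.continuous.abs).rpow_const fun x => Or.inr hp0.le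
    · exact hvs.comp_left (g := fun t : ℝ => |t| ^ p) (by simp [Real.zero_rpow hp0.ne'])
  have hIvpos : 0 < ∫ x : EuclideanSpace ℝ (Fin N), |v x| ^ p := by
    rw [integral_pos_iff_support_of_nonneg (fun x => by positivity) hIv]
    have hsupp_eq : (Function.support fun x : EuclideanSpace ℝ (Fin N) => |v x| ^ p)
        = Function.support v := by
      ext x
      simp only [Function.mem_support]
      constructor
      · intro h hx
        exact h (by simp [hx, Real.zero_rpow hp0.ne'])
      · intro h
        have : 0 < |v x| := abs_pos.2 h
        exact (Real.rpow_pos_of_pos this p).ne'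
    rw [hsupp_eq]
    obtain ⟨x0, hx0⟩ := Function.ne_iff.1 hv0
    exact (hv.continuous.isOpen_support).measure_pos volume ⟨x0, hx0⟩
  have hdenpos : 0 < (∫ x : EuclideanSpace ℝ (Fin N), |v x| ^ p) ^ (2 / p) :=
    Real.rpow_pos_of_pos hIvpos _
  have hSv : S * (∫ x : EuclideanSpace ℝ (Fin N), |v x| ^ p) ^ (2 / p)
      ≤ ∫ x : EuclideanSpace ℝ (Fin N), ‖fderiv ℝ v x‖ ^ 2 :=
    (le_div_iff₀ hdenpos).1 hSle
  -- comparison of the Lp norms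
  have Ileft : Integrable (fun x : EuclideanSpace ℝ (Fin N) =>
      Real.exp (‖x‖ ^ 2 / 2) * |u x| ^ p) := by
    apply Continuous.integrable_of_hasCompactSupport
    · exact hcwt.mul ((hu.continuous.abs).rpow_const fun x => Or.inr hp0.le)
    · exact HasCompactSupport.mul_left
        (hsupp.comp_left (g := fun t : ℝ => |t| ^ p) (by simp [Real.zero_rpow hp0.ne']))
  have hcomp : ∫ x : EuclideanSpace ℝ (Fin N), Real.exp (‖x‖ ^ 2 / 2) * |u x| ^ p
      ≤ ∫ x : EuclideanSpace ℝ (Fin N), |v x| ^ p := by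
    apply integral_mono Ileft hIv
    intro x
    show Real.exp (‖x‖ ^ 2 / 2) * |u x| ^ p ≤ |v x| ^ p
    have hvabs : |v x| ^ p = |u x| ^ p * Real.exp (‖x‖ ^ 2 / 4 * p) := by
      simp only [hvdef]
      rw [abs_mul, abs_of_pos (Real.exp_pos _),
        Real.mul_rpow (abs_nonneg _) (Real.exp_pos _).le, Real.exp_mul]
    rw [hvabs]
    have hle : Real.exp (‖x‖ ^ 2 / 2) ≤ Real.exp (‖x‖ ^ 2 / 4 * p) := by
      apply Real.exp_le_exp.2
      nlinarith [sq_nonneg ‖x‖]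
    calc Real.exp (‖x‖ ^ 2 / 2) * |u x| ^ p
        ≤ Real.exp (‖x‖ ^ 2 / 4 * p) * |u x| ^ p :=
          mul_le_mul_of_nonneg_right hle (Real.rpow_nonneg (abs_nonneg _) _)
      _ = |u x| ^ p * Real.exp (‖x‖ ^ 2 / 4 * p) := mul_comm _ _
  have hrp : (∫ x, |u x| ^ p ∂(mN N)) ^ (2 / p)
      ≤ (∫ x : EuclideanSpace ℝ (Fin N), |v x| ^ p) ^ (2 / p) := by
    rw [mN_integral N (fun x => |u x| ^ p)]
    exact Real.rpow_le_rpow (integral_nonneg fun x => by positivity) hcomp (by positivity)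
  -- conclusion
  rw [mN_integral N (fun x => u x ^ 2), mN_integral N (fun x => ‖fderiv ℝ u x‖ ^ 2)]
  have hfinal : S * (∫ x, |u x| ^ p ∂(mN N)) ^ (2 / p)
      ≤ ∫ x : EuclideanSpace ℝ (Fin N), ‖fderiv ℝ v x‖ ^ 2 :=
    le_trans (mul_le_mul_of_nonneg_left hrp hS0) hSv
  have : (N : ℝ) / 2 * ∫ x : EuclideanSpace ℝ (Fin N), Real.exp (‖x‖ ^ 2 / 2) * u x ^ 2
      = (N / 2) * M := by rw [hMdef]
  rw [this]
  have hGoal : G = ∫ x : EuclideanSpace ℝ (Fin N), Real.exp (‖x‖ ^ 2 / 2) * ‖fderiv ℝ u x‖ ^ 2 :=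
    hGdef
  linarith [h4, hfinal, hP0]
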